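/- Let G be a finite simple graph containing two distinct vertices u and v with deg(v) = 1 and deg(u) ≤ 2, and suppose u and v have a common neighbor w. Let E′ consist of all edges of G incident with u together with the edge vw. Then |E′| ≤ 3 and γ(G − E′) > γ(G). -/

import Mathlib

/-!
Deleting `E'` isolates both `u` and `v`, so every dominating set of `G - E'` contains them.
Replacing the pair `u, v` by their common neighbour `w` gives a dominating set of `G` that is
one vertex smaller.
-/

open SimpleGraph

/-- `S` is a dominating set of `G`. -/
def IsDomSet {V : Type*} (G : SimpleGraph V) (S : Finset V) : Prop :=
  ∀ v : V, v ∈ S ∨ ∃ u ∈ S, G.Adj u v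

/-- The domination number `γ(G)`. -/
noncomputable def domNum {V : Type*} (G : SimpleGraph V) : ℕ :=
  sInf {n | ∃ S : Finset V, IsDomSet G S ∧ S.card = n}

/-- `C` is a vertex cover of `G`. -/
def IsVC {V : Type*} (G : SimpleGraph V) (C : Finset V) : Prop :=
  ∀ e ∈ G.edgeSet, ∃ x ∈ C, x ∈ e

/-- The vertex cover number `τ(G)`. -/
noncomputable def tau {V : Type*} (G : SimpleGraph V) : ℕ :=
  sInf {n | ∃ C : Finset V, IsVC G C ∧ C.card = n}

/-- `S` is an independent set of `G`. -/
def IsIndep {V : Type*} (G : SimpleGraph V) (S : Finset V) : Prop :=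
  ∀ a ∈ S, ∀ b ∈ S, ¬ G.Adj a b

/-- The independence number `α(G)`. -/
noncomputable def indepNum {V : Type*} (G : SimpleGraph V) : ℕ :=
  sSup {n | ∃ S : Finset V, IsIndep G S ∧ S.card = n}

/-- The bondage number `b(G)`. -/
noncomputable def bondage {V : Type*} (G : SimpleGraph V) : ℕ :=
  sInf {n | ∃ E' : Finset (Sym2 V), ↑E' ⊆ G.edgeSet ∧ E'.card = n ∧
    domNum (G.deleteEdges ↑E') = domNum G + 1}

/-- The graph `G_v+u` obtained from `G` by adding one new vertex (`none`) adjacent only to `v`. -/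
def addLeaf {V : Type*} (G : SimpleGraph V) (v : V) : SimpleGraph (Option V) :=
  SimpleGraph.fromRel (fun x y =>
    (∃ a b, x = some a ∧ y = some b ∧ G.Adj a b) ∨ (x = some v ∧ y = none))

/-- The graph `G_A+` obtained from `G` by adding, for each `v ∈ A`, one new pendant
vertex adjacent only to `v`. -/
def addLeaves {V : Type*} (G : SimpleGraph V) (A : Finset V) :
    SimpleGraph (V ⊕ {x // x ∈ A}) :=
  SimpleGraph.fromRel (fun x y =>
    (∃ a b, x = Sum.inl a ∧ y = Sum.inl b ∧ G.Adj a b) ∨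
    (∃ a : {x // x ∈ A}, x = Sum.inl a.1 ∧ y = Sum.inr a))

/-- The `3`-subdivision of the edge `uv` of `G`: the edge `uv` is deleted, three new
vertices `u' = Sum.inr 0`, `w = Sum.inr 1`, `v' = Sum.inr 2` are added, together with the
four edges `u u'`, `u' w`, `w v'`, `v' v`. -/
def subdiv3 {V : Type*} (G : SimpleGraph V) (u v : V) : SimpleGraph (V ⊕ Fin 3) :=
  SimpleGraph.fromRel (fun x y =>
    match x, y with
    | Sum.inl a, Sum.inl b => G.Adj a b ∧ s(a, b) ≠ s(u, v)
    | Sum.inl a, Sum.inr i => (a = u ∧ i = 0) ∨ (a = v ∧ i = 2)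
    | Sum.inr i, Sum.inr j => (i = 0 ∧ j = 1) ∨ (i = 1 ∧ j = 2)
    | _, _ => False)

open Finset

section Domination

variable {V : Type*} {G H : SimpleGraph V} {S : Finset V}

theorem domNum_le_card (hS : IsDomSet G S) : domNum G ≤ #S :=
  Nat.sInf_le ⟨S, hS, rfl⟩

theorem exists_isDomSet_card_eq_domNum [Fintype V] (G : SimpleGraph V) :
    ∃ S : Finset V, IsDomSet G S ∧ #S = domNum G :=
  Nat.sInf_mem (s := {n | ∃ S : Finset V, IsDomSet G S ∧ S.card = n})
    ⟨_, univ, fun v => Or.inl (mem_univ v), rfl⟩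

theorem IsDomSet.mem_of_isolated (hS : IsDomSet G S) {u : V} (hu : ∀ x, ¬ G.Adj u x) :
    u ∈ S :=
  (hS u).resolve_right fun ⟨x, _, hx⟩ => hu x hx.symm

theorem IsDomSet.insert_sdiff_of_isolated [DecidableEq V] (hHG : H ≤ G) (hS : IsDomSet H S)
    {I : Finset V} {w : V} (hI : ∀ u ∈ I, ∀ x, ¬ H.Adj u x) (hw : ∀ u ∈ I, G.Adj w u) :
    IsDomSet G (insert w (S \ I)) := by
  intro x
  by_cases hx : x ∈ I
  · exact Or.inr ⟨w, mem_insert_self _ _, hw x hx⟩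
  rcases hS x with hxS | ⟨s, hs, hsx⟩
  · exact Or.inl (mem_insert_of_mem (mem_sdiff.2 ⟨hxS, hx⟩))
  · exact Or.inr ⟨s, mem_insert_of_mem (mem_sdiff.2 ⟨hs, fun hsI => hI s hsI x hsx⟩), hHG hsx⟩

theorem domNum_lt_of_le_of_isolated_pair [Fintype V] [DecidableEq V] (hHG : H ≤ G)
    {u v w : V} (huv : u ≠ v) (hu : ∀ x, ¬ H.Adj u x) (hv : ∀ x, ¬ H.Adj v x)
    (hwu : G.Adj w u) (hwv : G.Adj w v) :
    domNum G < domNum H := by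
  obtain ⟨S, hS, hcard⟩ := exists_isDomSet_card_eq_domNum H
  have hI : ∀ x ∈ ({u, v} : Finset V), ∀ y, ¬ H.Adj x y := by
    simp only [mem_insert, mem_singleton, forall_eq_or_imp, forall_eq]
    exact ⟨hu, hv⟩
  have hw : ∀ x ∈ ({u, v} : Finset V), G.Adj w x := by
    simp only [mem_insert, mem_singleton, forall_eq_or_imp, forall_eq]
    exact ⟨hwu, hwv⟩
  have hsub : {u, v} ⊆ S :=
    insert_subset (hS.mem_of_isolated hu) (singleton_subset_iff.2 (hS.mem_of_isolated hv))
  have hS2 : 2 ≤ #S := card_pair huv ▸ card_le_card hsub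
  calc domNum G ≤ #(insert w (S \ {u, v})) :=
        domNum_le_card (hS.insert_sdiff_of_isolated hHG hI hw)
    _ ≤ #(S \ {u, v}) + 1 := card_insert_le _ _
    _ = #S - 2 + 1 := by rw [card_sdiff_of_subset hsub, card_pair huv]
    _ < domNum H := by omega

end Domination

theorem not_adj_deleteEdges_of_forall_adj_mem {V : Type*} {G : SimpleGraph V}
    {s : Set (Sym2 V)} {u : V} (h : ∀ x, G.Adj u x → s(u, x) ∈ s) (x : V) :
    ¬ (G.deleteEdges s).Adj u x :=
  fun hx => (deleteEdges_adj.1 hx).2 (h x (deleteEdges_adj.1 hx).1)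

/-- If `deg(v) = 1`, `deg(u) ≤ 2`, `u ≠ v`, and `w` is a common neighbor of `u` and `v`,
and `E'` consists of all edges incident with `u` together with the edge `vw`, then
`|E'| ≤ 3` and `γ(G − E') > γ(G)`. -/
theorem stmt5 {V : Type*} [Fintype V] [DecidableEq V] (G : SimpleGraph V)
    [DecidableRel G.Adj] (u v w : V) (huv : u ≠ v)
    (hdv : G.degree v = 1) (hdu : G.degree u ≤ 2)
    (huw : G.Adj u w) (hvw : G.Adj v w) :
    (insert s(v, w) (G.edgeFinset.filter (fun e => u ∈ e))).card ≤ 3 ∧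
    domNum G <
      domNum (G.deleteEdges ↑(insert s(v, w) (G.edgeFinset.filter (fun e => u ∈ e)))) := by
  refine ⟨?_, domNum_lt_of_le_of_isolated_pair (deleteEdges_le _) huv
    (not_adj_deleteEdges_of_forall_adj_mem fun x hx => ?_)
    (not_adj_deleteEdges_of_forall_adj_mem fun x hx => ?_) huw.symm hvw.symm⟩
  · calc _ ≤ #(G.edgeFinset.filter (fun e => u ∈ e)) + 1 := card_insert_le _ _
      _ = G.degree u + 1 := by rw [← incidenceFinset_eq_filter, card_incidenceFinset_eq_degree]
      _ ≤ 3 := by omega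
  · exact mem_insert_of_mem (mem_filter.2 ⟨mem_edgeFinset.2 hx, Sym2.mem_mk_left u x⟩)
  · obtain ⟨_, -, hunique⟩ := degree_eq_one_iff_existsUnique_adj.1 hdv
    rw [hunique x hx, ← hunique w hvw]
    exact mem_insert_self _ _
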